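/- Let f : ℝ² → [0,∞) be measurable with f ≤ M pointwise and e := 4π∫f(p)√(1+|p|²)dp < ∞. Then ∫ f(p)/√(1+|p|²) dp ≤ C e^{1/3} with C depending only on M. (Split the integral at radius r = e^{1/3} and use ∫_{|p|<r} (1+|p|²)^{-1/2} dp ≤ 2πr and (1+r²)^{-1}∫_{|p|≥r} f√(1+|p|²)dp ≤ e/r².) -/

import Mathlib

/-!
Split the integral at radius `r`. Inside the ball use `f ≤ M` and the two-dimensional bound
`∫_{|p|<r} (1+|p|²)^{-1/2} dp ≤ 2πr`; outside use `1/√(1+|p|²) ≤ √(1+|p|²)/r²`, which bounds that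
part by `I/r²` with `I = ∫ f √(1+|p|²)`. Hence `∫ f/√(1+|p|²) ≤ 2πMr + I/r²`, and the choice
`r³ = 4πI` gives `(2πM + 1/(4π)) (4πI)^{1/3}`.
-/

open MeasureTheory Real

noncomputable section

abbrev E2 := EuclideanSpace ℝ (Fin 2)

open Metric Set Module

section

variable {E : Type*} [NormedAddCommGroup E]

theorem one_le_sqrt_one_add_norm_sq (x : E) : 1 ≤ √(1 + ‖x‖ ^ 2) :=
  one_le_sqrt.mpr (le_add_of_nonneg_right (sq_nonneg _))

theorem div_sqrt_one_add_norm_sq_le_mul {a : ℝ} (ha : 0 ≤ a) (x : E) :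
    a / √(1 + ‖x‖ ^ 2) ≤ a * √(1 + ‖x‖ ^ 2) :=
  (div_le_self ha (one_le_sqrt_one_add_norm_sq x)).trans
    (le_mul_of_one_le_right ha (one_le_sqrt_one_add_norm_sq x))

theorem div_sqrt_one_add_norm_sq_le_indicator_add {a M r : ℝ} (ha : 0 ≤ a) (haM : a ≤ M)
    (hr : 0 < r) (x : E) :
    a / √(1 + ‖x‖ ^ 2) ≤
      (ball 0 r).indicator (fun y => M * (√(1 + ‖y‖ ^ 2))⁻¹) x + a * √(1 + ‖x‖ ^ 2) / r ^ 2 := by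
  have hw : 0 < √(1 + ‖x‖ ^ 2) := one_pos.trans_le (one_le_sqrt_one_add_norm_sq x)
  by_cases hx : x ∈ ball 0 r
  · rw [indicator_of_mem hx, ← div_eq_mul_inv]
    have : 0 ≤ a * √(1 + ‖x‖ ^ 2) / r ^ 2 := by positivity
    linarith [div_le_div_of_nonneg_right haM hw.le]
  · have hrx : r ^ 2 ≤ √(1 + ‖x‖ ^ 2) ^ 2 := by
      rw [sq_sqrt (by positivity)]
      nlinarith [not_lt.mp (mem_ball_zero_iff.not.mp hx)]
    calc a / √(1 + ‖x‖ ^ 2) = a * √(1 + ‖x‖ ^ 2) / √(1 + ‖x‖ ^ 2) ^ 2 := by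
          field_simp
      _ ≤ a * √(1 + ‖x‖ ^ 2) / r ^ 2 := by gcongr
      _ = _ := by rw [indicator_of_notMem hx, zero_add]

variable [MeasurableSpace E] [OpensMeasurableSpace E] {μ : Measure E} {f : E → ℝ}

theorem MeasureTheory.Integrable.div_sqrt_one_add_norm_sq
    (hfw : Integrable (fun x => f x * √(1 + ‖x‖ ^ 2)) μ) (hf : AEStronglyMeasurable f μ) :
    Integrable (fun x => f x / √(1 + ‖x‖ ^ 2)) μ := by
  have hw : AEStronglyMeasurable (fun x : E => (√(1 + ‖x‖ ^ 2))⁻¹) μ := by fun_prop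
  refine hfw.mono (hf.mul hw) (ae_of_all _ fun x => ?_)
  simpa [norm_div, norm_mul, abs_of_nonneg (sqrt_nonneg _)] using
    div_sqrt_one_add_norm_sq_le_mul (abs_nonneg (f x)) x

theorem integral_div_sqrt_one_add_norm_sq_le [ProperSpace E] [IsFiniteMeasureOnCompacts μ]
    {M r : ℝ} (hf : AEStronglyMeasurable f μ) (hf0 : ∀ x, 0 ≤ f x) (hfM : ∀ x, f x ≤ M)
    (hfw : Integrable (fun x => f x * √(1 + ‖x‖ ^ 2)) μ) (hr : 0 < r) :
    ∫ x, f x / √(1 + ‖x‖ ^ 2) ∂μ ≤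
      M * (∫ x in ball 0 r, (√(1 + ‖x‖ ^ 2))⁻¹ ∂μ) + (∫ x, f x * √(1 + ‖x‖ ^ 2) ∂μ) / r ^ 2 := by
  have hball : Integrable ((ball 0 r).indicator fun x : E => M * (√(1 + ‖x‖ ^ 2))⁻¹) μ := by
    refine (integrable_indicator_iff measurableSet_ball).mpr
      (Measure.integrableOn_of_bounded (M := |M|) measure_ball_lt_top.ne (by fun_prop)
        (ae_of_all _ fun x => ?_))
    rw [norm_mul, norm_inv, norm_of_nonneg (sqrt_nonneg _)]
    exact mul_le_of_le_one_right (abs_nonneg M)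
      (inv_le_one_of_one_le₀ (one_le_sqrt_one_add_norm_sq x))
  calc ∫ x, f x / √(1 + ‖x‖ ^ 2) ∂μ
      ≤ ∫ x, ((ball 0 r).indicator (fun y => M * (√(1 + ‖y‖ ^ 2))⁻¹) x
          + f x * √(1 + ‖x‖ ^ 2) / r ^ 2) ∂μ :=
        integral_mono (hfw.div_sqrt_one_add_norm_sq hf) (hball.add (hfw.div_const _))
          fun x => div_sqrt_one_add_norm_sq_le_indicator_add (hf0 x) (hfM x) hr x
    _ = _ := by
        rw [integral_add hball (hfw.div_const _), integral_indicator measurableSet_ball,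
          integral_const_mul, integral_div]

end

theorem integral_Ioi_mul_indicator_inv_sqrt_one_add_sq_le {r : ℝ} (hr : 0 ≤ r) :
    ∫ y in Ioi (0 : ℝ), y * (Iio r).indicator (fun s => (√(1 + s ^ 2))⁻¹) y ≤ r := by
  calc ∫ y in Ioi (0 : ℝ), y * (Iio r).indicator (fun s => (√(1 + s ^ 2))⁻¹) y
      ≤ ∫ y in Ioi (0 : ℝ), (Iio r).indicator 1 y := by
        refine integral_mono_of_nonneg ?_ ?_ ?_
        · filter_upwards [self_mem_ae_restrict measurableSet_Ioi] with y hy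
          exact mul_nonneg hy.le (indicator_nonneg (fun _ _ => by positivity) y)
        · refine (integrable_indicator_iff measurableSet_Iio).mpr (integrableOn_const ?_)
          simp [Measure.restrict_apply measurableSet_Iio, Iio_inter_Ioi]
        · filter_upwards [self_mem_ae_restrict measurableSet_Ioi] with y hy
          by_cases hyr : y < r
          · simp only [indicator_of_mem (mem_Iio.mpr hyr), Pi.one_apply]
            exact mul_inv_le_one_of_le₀ (le_sqrt_of_sq_le (by linarith)) (sqrt_nonneg _)
          · simp [hyr]
    _ = r := by
        rw [integral_indicator measurableSet_Iio]
        simp [Iio_inter_Ioi, hr]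

theorem integral_ball_inv_sqrt_one_add_norm_sq_le {E : Type*} [NormedAddCommGroup E]
    [InnerProductSpace ℝ E] [FiniteDimensional ℝ E] [MeasurableSpace E] [BorelSpace E]
    (hE : finrank ℝ E = 2) {r : ℝ} (hr : 0 ≤ r) :
    ∫ x in ball (0 : E) r, (√(1 + ‖x‖ ^ 2))⁻¹ ≤ 2 * π * r := by
  have : Nontrivial E := Module.nontrivial_of_finrank_eq_succ hE
  have hradial : ∫ x in ball (0 : E) r, (√(1 + ‖x‖ ^ 2))⁻¹
      = ∫ x : E, (Iio r).indicator (fun s => (√(1 + s ^ 2))⁻¹) ‖x‖ := by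
    rw [← integral_indicator measurableSet_ball]
    congr 1 with x
    simp only [indicator, mem_ball_zero_iff, mem_Iio]
  have hunit : volume.real (ball (0 : E) 1) = π := by
    simp [measureReal_def, InnerProductSpace.volume_ball_of_dim_even (k := 1) hE, pi_nonneg]
  rw [hradial, integral_fun_norm_addHaar, hE, hunit]
  simp only [nsmul_eq_mul, smul_eq_mul, Nat.cast_ofNat, Nat.add_one_sub_one, pow_one]
  nlinarith [pi_pos, integral_Ioi_mul_indicator_inv_sqrt_one_add_sq_le hr]

/-- For bounded nonnegative measurable `f` on momentum space with finite kinetic energy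
`e = 4π∫f√(1+|p|²)dp`, one has `∫ f/√(1+|p|²) dp ≤ C e^{1/3}` with `C` depending
only on the bound `M`. -/
theorem integral_div_sqrt_le_energy_pow (M : ℝ) (hM : 0 ≤ M) :
    ∃ C : ℝ, 0 < C ∧ ∀ f : E2 → ℝ, Measurable f → (∀ p, 0 ≤ f p) → (∀ p, f p ≤ M) →
      (Integrable fun p => f p * Real.sqrt (1 + ‖p‖ ^ 2)) →
      (∫ p, f p / Real.sqrt (1 + ‖p‖ ^ 2))
        ≤ C * (4 * π * ∫ p, f p * Real.sqrt (1 + ‖p‖ ^ 2)) ^ ((1:ℝ)/3) := by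
  refine ⟨2 * π * M + 1 / (4 * π), by positivity, fun f hf hf0 hfM hfw => ?_⟩
  set I := ∫ p, f p * √(1 + ‖p‖ ^ 2)
  have hI0 : 0 ≤ I := integral_nonneg fun p => mul_nonneg (hf0 p) (sqrt_nonneg _)
  rcases hI0.eq_or_lt with hI | hI
  · calc ∫ p, f p / √(1 + ‖p‖ ^ 2) ≤ I :=
          integral_mono (hfw.div_sqrt_one_add_norm_sq hf.aestronglyMeasurable) hfw
            fun p => div_sqrt_one_add_norm_sq_le_mul (hf0 p) p
      _ = _ := by rw [← hI, mul_zero, zero_rpow (by norm_num), mul_zero]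
  set r := (4 * π * I) ^ ((1 : ℝ) / 3)
  have hr : 0 < r := by positivity
  have hr3 : r ^ 3 = 4 * π * I := by
    rw [← rpow_natCast, ← rpow_mul (by positivity)]
    norm_num
  calc ∫ p, f p / √(1 + ‖p‖ ^ 2)
      ≤ M * (∫ p in ball 0 r, (√(1 + ‖p‖ ^ 2))⁻¹) + I / r ^ 2 :=
        integral_div_sqrt_one_add_norm_sq_le hf.aestronglyMeasurable hf0 hfM hfw hr
    _ ≤ M * (2 * π * r) + I / r ^ 2 := by
        gcongr
        exact integral_ball_inv_sqrt_one_add_norm_sq_le finrank_euclideanSpace_fin hr.le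
    _ = (2 * π * M + 1 / (4 * π)) * r := by
        field_simp
        linear_combination -hr3
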